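/- Let T : ℝ₊^N → ℝ₊₊^N be a positive concave mapping whose lower bounding matrix M satisfies ρ(M) < 1. Then the accelerated mapping T_A(x) := (I − M)⁻¹·(T(x) − M·x) is a standard interference mapping: each of its components satisfies scalability (α·T_A(x) > T_A(α·x) componentwise for all α > 1 and x ∈ ℝ₊^N) and monotonicity (x ≤ y implies T_A(x) ≤ T_A(y) componentwise). -/

import Mathlib

/-!
Every supergradient of `f i` at a point of the open orthant dominates the `i`-th row of the
lower bounding matrix `M`, so `f i y - f i x ≥ M i ⬝ᵥ (y - x)` for `x ≤ y`: first at the interior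
points `x + ε • 1 ≤ y + ε • 1` and then, as `ε → 0⁺`, at `x` and `y` themselves (concavity
bounds `f` from below along the segment, upper semicontinuity from above). Hence `x ↦ T x - M x`
is monotone, and it is positive and strictly scalable because `f i 0 > 0` and `f i` is concave.
Since `ρ(M) < 1`, the Neumann series `∑ Mⁿ` converges to `(1 - M)⁻¹`, which therefore dominates
the identity entrywise; multiplying by such a matrix preserves all three properties.
-/

open Matrix Filter Topology

noncomputable section

/-- `g` is a supergradient of `f` at `x`: the supergradient inequality holds for all
points `y` in the nonnegative orthant. -/
def IsSupergrad {N : ℕ} (f : (Fin N → ℝ) → ℝ) (x g : Fin N → ℝ) : Prop :=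
  ∀ y : Fin N → ℝ, 0 ≤ y → f y ≤ f x + ∑ i, g i * (y i - x i)

/-- `M` is the lower bounding matrix of the positive concave mapping with components `f i`:
`M i k` is the infimum of the `k`-th components of all supergradients of `f i` at points of
the nonnegative orthant. -/
def IsLBM {N : ℕ} (f : Fin N → (Fin N → ℝ) → ℝ) (M : Matrix (Fin N) (Fin N) ℝ) : Prop :=
  ∀ i k, M i k =
    sInf {t : ℝ | ∃ x : Fin N → ℝ, 0 ≤ x ∧ ∃ g : Fin N → ℝ, IsSupergrad (f i) x g ∧ g k = t}

/-- The spectral radius of a real matrix: the supremum of the moduli of its complex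
eigenvalues. -/
def specRad {N : ℕ} (M : Matrix (Fin N) (Fin N) ℝ) : ENNReal :=
  spectralRadius ℂ (M.map (algebraMap ℝ ℂ))

theorem mk_notMem_interior_hypograph {E : Type*} [TopologicalSpace E] {s : Set E} {f : E → ℝ}
    (z : E) : (z, f z) ∉ interior {p : E × ℝ | p.1 ∈ s ∧ p.2 ≤ f p.1} := by
  intro h
  have hpath : Tendsto (fun t : ℝ => (z, t)) (𝓝[>] (f z)) (𝓝 (z, f z)) :=
    (Continuous.prodMk_right z).continuousAt.tendsto.mono_left nhdsWithin_le_nhds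
  obtain ⟨t, ⟨-, ht⟩, hzt⟩ :=
    ((hpath.eventually (mem_interior_iff_mem_nhds.1 h)).and self_mem_nhdsWithin).exists
  exact lt_irrefl _ (hzt.trans_le ht)

section Supergradient

variable {E : Type*} [NormedAddCommGroup E] [NormedSpace ℝ E] [FiniteDimensional ℝ E]
  {s : Set E} {f : E → ℝ}

theorem ConcaveOn.mk_mem_interior_hypograph (hf : ConcaveOn ℝ s f) {z : E} (hz : z ∈ interior s)
    {t : ℝ} (ht : t < f z) : (z, t) ∈ interior {p : E × ℝ | p.1 ∈ s ∧ p.2 ≤ f p.1} := by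
  obtain ⟨c, htc, hcf⟩ := exists_between ht
  have hfz : ContinuousAt f z :=
    hf.continuousOn_interior.continuousAt (isOpen_interior.mem_nhds hz)
  rw [mem_interior_iff_mem_nhds]
  filter_upwards [continuousAt_fst.eventually (mem_interior_iff_mem_nhds.1 hz),
    (hfz.comp continuousAt_fst).eventually (lt_mem_nhds hcf),
    continuousAt_snd.eventually (gt_mem_nhds htc)] with p hp hfp hpc
  exact ⟨hp, hpc.le.trans hfp.le⟩

/-- Separate `(z, f z)` from the interior of the hypograph; the separating functional `L` is not
vertical, i.e. `L (0, 1) > 0`, because `(z, f z - 1)` lies in that interior. -/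
theorem ConcaveOn.exists_supergradient (hf : ConcaveOn ℝ s f) {z : E} (hz : z ∈ interior s) :
    ∃ g : StrongDual ℝ E, ∀ y ∈ s, f y ≤ f z + g (y - z) := by
  set C := {p : E × ℝ | p.1 ∈ s ∧ p.2 ≤ f p.1}
  have hC : Convex ℝ C := hf.convex_hypograph
  have hint := hf.mk_mem_interior_hypograph hz (sub_one_lt (f z))
  obtain ⟨L, hL⟩ := geometric_hahn_banach_open_point hC.interior isOpen_interior
    (mk_notMem_interior_hypograph z)
  have hLC : ∀ p ∈ C, L p ≤ L (z, f z) := by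
    refine fun p hp => closure_minimal (fun q hq => (hL q hq).le)
      (isClosed_le L.continuous continuous_const) ?_
    rw [hC.closure_interior_eq_closure_of_nonempty_interior ⟨_, hint⟩]
    exact subset_closure hp
  have hsplit : ∀ y t, L (y, t) = L (y, 0) + t * L (0, 1) := fun y t => by
    rw [← smul_eq_mul, ← map_smul, ← map_add, Prod.smul_mk, smul_zero, smul_eq_mul, mul_one,
      Prod.mk_add_mk, add_zero, zero_add]
  have hc : 0 < L (0, 1) := by
    have := hL _ hint
    rw [hsplit z, hsplit z (f z)] at this
    linarith
  refine ⟨-(L (0, 1))⁻¹ • L.comp (ContinuousLinearMap.inl ℝ E ℝ), fun y hy => ?_⟩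
  have hy := hLC (y, f y) ⟨hy, le_rfl⟩
  rw [hsplit y, hsplit z] at hy
  have hg : (-(L (0, 1))⁻¹ • L.comp (ContinuousLinearMap.inl ℝ E ℝ)) (y - z)
      = (L (z, 0) - L (y, 0)) / L (0, 1) := by
    simp only [map_sub, FunLike.coe_smul, ContinuousLinearMap.coe_comp,
      Pi.smul_apply, Function.comp_apply, ContinuousLinearMap.inl_apply, smul_eq_mul]
    ring
  rw [hg, ← sub_le_iff_le_add', le_div_iff₀ hc]
  linarith

end Supergradient

section ConcaveOn

variable {E : Type*} [AddCommGroup E] [Module ℝ E] {s : Set E} {f : E → ℝ}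

theorem ConcaveOn.tendsto_add_smul_nhdsGT [TopologicalSpace E] [ContinuousAdd E]
    [ContinuousSMul ℝ E] (hf : ConcaveOn ℝ s f) (husc : UpperSemicontinuousOn f s) {x v : E}
    (hx : x ∈ s) (hxv : x + v ∈ s) :
    Tendsto (fun ε : ℝ => f (x + ε • v)) (𝓝[>] 0) (𝓝 (f x)) := by
  have hsmall : ∀ᶠ ε in 𝓝[>] (0 : ℝ), ε ∈ Set.Ioo 0 1 := Ioo_mem_nhdsGT one_pos
  have hseg : ∀ ε ∈ Set.Ioo (0 : ℝ) 1,
      x + ε • v ∈ s ∧ (1 - ε) * f x + ε * f (x + v) ≤ f (x + ε • v) := fun ε hε => by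
    have hcomb : (1 - ε) • x + ε • (x + v) = x + ε • v := by module
    rw [← hcomb]
    exact ⟨hf.1 hx hxv (by linarith [hε.2]) hε.1.le (by ring),
      hf.2 hx hxv (by linarith [hε.2]) hε.1.le (by ring)⟩
  have hpath : Tendsto (fun ε : ℝ => x + ε • v) (𝓝[>] 0) (𝓝[s] x) :=
    tendsto_nhdsWithin_iff.2
      ⟨((by fun_prop : Continuous fun ε : ℝ => x + ε • v).tendsto' 0 x (by simp)).mono_left
        nhdsWithin_le_nhds, hsmall.mono fun ε hε => (hseg ε hε).1⟩
  have hlow : Tendsto (fun ε : ℝ => (1 - ε) * f x + ε * f (x + v)) (𝓝[>] 0) (𝓝 (f x)) :=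
    ((by fun_prop : Continuous fun ε : ℝ => (1 - ε) * f x + ε * f (x + v)).tendsto' 0 (f x)
      (by simp)).mono_left nhdsWithin_le_nhds
  refine tendsto_order.2 ⟨fun a ha => ?_, fun b hb => hpath.eventually (husc x hx b hb)⟩
  filter_upwards [hlow.eventually (lt_mem_nhds ha), hsmall] with ε hlow hε
  exact hlow.trans_le (hseg ε hε).2

theorem ConcaveOn.map_smul_lt_mul (hf : ConcaveOn ℝ s f) (h0 : (0 : E) ∈ s) (hf0 : 0 < f 0)
    {x : E} {α : ℝ} (hα : 1 < α) (hαx : α • x ∈ s) : f (α • x) < α * f x := by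
  have hα0 : 0 < α := zero_lt_one.trans hα
  have h := hf.2 hαx h0 (inv_nonneg.2 hα0.le) (sub_nonneg.2 (inv_le_one_of_one_le₀ hα.le))
    (add_sub_cancel _ _)
  rw [smul_smul, inv_mul_cancel₀ hα0.ne', one_smul, smul_zero, add_zero, smul_eq_mul,
    smul_eq_mul] at h
  have hscaled : α * (α⁻¹ * f (α • x) + (1 - α⁻¹) * f 0) = f (α • x) + (α - 1) * f 0 := by
    field_simp
  nlinarith [mul_le_mul_of_nonneg_left h hα0.le, mul_pos (sub_pos.2 hα) hf0]

end ConcaveOn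

theorem sub_mulVec_smul_lt {N : ℕ} {f : Fin N → (Fin N → ℝ) → ℝ} (M : Matrix (Fin N) (Fin N) ℝ)
    (hconc : ∀ i, ConcaveOn ℝ {x : Fin N → ℝ | 0 ≤ x} (f i)) (hf0 : ∀ i, 0 < f i 0)
    {x : Fin N → ℝ} (hx : 0 ≤ x) {α : ℝ} (hα : 1 < α) (i : Fin N) :
    ((fun i => f i (α • x)) - M *ᵥ (α • x)) i < (α • ((fun i => f i x) - M *ᵥ x)) i := by
  have := (hconc i).map_smul_lt_mul (le_refl (0 : Fin N → ℝ)) (hf0 i) hα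
    (smul_nonneg (zero_le_one.trans hα.le) hx)
  simp only [Pi.sub_apply, Pi.smul_apply, mulVec_smul, smul_eq_mul]
  linarith

section Orthant

variable {N : ℕ} {f : (Fin N → ℝ) → ℝ}

theorem isSupergrad_iff {x g : Fin N → ℝ} :
    IsSupergrad f x g ↔ ∀ y : Fin N → ℝ, 0 ≤ y → f y ≤ f x + g ⬝ᵥ (y - x) :=
  Iff.rfl

theorem mem_interior_orthant {z : Fin N → ℝ} (hz : ∀ j, 0 < z j) :
    z ∈ interior {x : Fin N → ℝ | 0 ≤ x} := by
  rw [mem_interior_iff_mem_nhds]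
  filter_upwards [eventually_all.2 fun j =>
    (continuous_apply j).continuousAt.eventually (lt_mem_nhds (hz j))] with x hx j
  exact (hx j).le

theorem exists_isSupergrad (hf : ConcaveOn ℝ {x : Fin N → ℝ | 0 ≤ x} f) {z : Fin N → ℝ}
    (hz : ∀ j, 0 < z j) : ∃ g, IsSupergrad f z g := by
  classical
  obtain ⟨g, hg⟩ := hf.exists_supergradient (mem_interior_orthant hz)
  refine ⟨fun k => g fun j => if k = j then 1 else 0, fun y hy => ?_⟩
  have h := hg y hy
  rw [← ContinuousLinearMap.coe_coe, LinearMap.pi_apply_eq_sum_univ] at h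
  simpa only [ContinuousLinearMap.coe_coe, Pi.sub_apply, smul_eq_mul, mul_comm] using h

theorem IsSupergrad.nonneg (hf : ∀ y : Fin N → ℝ, 0 ≤ y → 0 ≤ f y) {x g : Fin N → ℝ}
    (hx : 0 ≤ x) (hg : IsSupergrad f x g) (k : Fin N) : 0 ≤ g k := by
  by_contra! hk
  have ht : 0 ≤ (f x + 1) / -g k := div_nonneg (by linarith [hf x hx]) (by linarith)
  have hy : 0 ≤ x + Pi.single k ((f x + 1) / -g k) := add_nonneg hx (Pi.single_nonneg.2 ht)
  have h := isSupergrad_iff.1 hg _ hy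
  have hstep : g k * ((f x + 1) / -g k) = -(f x + 1) := by field_simp [hk.ne]
  rw [add_sub_cancel_left, dotProduct_single, hstep] at h
  linarith [hf _ hy]

theorem add_dotProduct_sub_le_of_le_isSupergrad (hconc : ConcaveOn ℝ {x : Fin N → ℝ | 0 ≤ x} f)
    (husc : UpperSemicontinuousOn f {x : Fin N → ℝ | 0 ≤ x}) {m : Fin N → ℝ}
    (hm : ∀ z g : Fin N → ℝ, (∀ j, 0 < z j) → IsSupergrad f z g → m ≤ g)
    {x y : Fin N → ℝ} (hx : 0 ≤ x) (hxy : x ≤ y) : f x + m ⬝ᵥ (y - x) ≤ f y := by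
  have hlim : ∀ u : Fin N → ℝ, 0 ≤ u →
      Tendsto (fun ε : ℝ => f (u + ε • 1)) (𝓝[>] 0) (𝓝 (f u)) := fun u hu =>
    hconc.tendsto_add_smul_nhdsGT husc hu (add_nonneg hu zero_le_one)
  refine le_of_tendsto_of_tendsto ((hlim x hx).add_const _) (hlim y (hx.trans hxy)) ?_
  filter_upwards [self_mem_nhdsWithin] with ε (hε : 0 < ε)
  have hshift : ∀ u : Fin N → ℝ, 0 ≤ u → ∀ j, 0 < (u + ε • 1) j := fun u hu j => by
    simpa using add_pos_of_nonneg_of_pos (hu j) hε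
  obtain ⟨g, hg⟩ := exists_isSupergrad hconc (hshift y (hx.trans hxy))
  have hsup := isSupergrad_iff.1 hg (x + ε • 1) fun j => (hshift x hx j).le
  rw [add_sub_add_right_eq_sub, ← neg_sub, dotProduct_neg] at hsup
  have hmg : m ⬝ᵥ (y - x) ≤ g ⬝ᵥ (y - x) :=
    dotProduct_le_dotProduct_of_nonneg_right (hm _ g (hshift y (hx.trans hxy)) hg)
      (sub_nonneg.2 hxy)
  linarith

end Orthant

namespace IsLBM

variable {N : ℕ} {f : Fin N → (Fin N → ℝ) → ℝ} {M : Matrix (Fin N) (Fin N) ℝ}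

theorem nonneg (hM : IsLBM f M) (hf : ∀ i, ∀ y : Fin N → ℝ, 0 ≤ y → 0 ≤ f i y) (i k : Fin N) :
    0 ≤ M i k := by
  rw [hM i k]
  exact Real.sInf_nonneg (by rintro _ ⟨x, hx, g, hg, rfl⟩; exact hg.nonneg (hf i) hx k)

theorem le_of_isSupergrad (hM : IsLBM f M) (hf : ∀ i, ∀ y : Fin N → ℝ, 0 ≤ y → 0 ≤ f i y)
    {i : Fin N} {x g : Fin N → ℝ} (hx : 0 ≤ x) (hg : IsSupergrad (f i) x g) : M i ≤ g := by
  intro k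
  rw [hM i k]
  exact csInf_le ⟨0, by rintro _ ⟨x, hx, g, hg, rfl⟩; exact hg.nonneg (hf i) hx k⟩
    ⟨x, hx, g, hg, rfl⟩

theorem sub_mulVec_le_sub_mulVec (hM : IsLBM f M)
    (hconc : ∀ i, ConcaveOn ℝ {x : Fin N → ℝ | 0 ≤ x} (f i))
    (husc : ∀ i, UpperSemicontinuousOn (f i) {x : Fin N → ℝ | 0 ≤ x})
    (hf : ∀ i, ∀ y : Fin N → ℝ, 0 ≤ y → 0 ≤ f i y) {x y : Fin N → ℝ} (hx : 0 ≤ x)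
    (hxy : x ≤ y) : (fun i => f i x) - M *ᵥ x ≤ (fun i => f i y) - M *ᵥ y := fun i => by
  have := add_dotProduct_sub_le_of_le_isSupergrad (hconc i) (husc i)
    (fun _ _ hz hg => hM.le_of_isSupergrad hf (fun j => (hz j).le) hg) hx hxy
  simp only [Pi.sub_apply, mulVec, dotProduct_sub] at this ⊢
  linarith

end IsLBM

section NeumannSeries

variable {A : Type*} [NormedRing A] [NormedAlgebra ℂ A] [CompleteSpace A]

theorem eventually_norm_pow_le_of_spectralRadius_lt {a : A} {r : NNReal}
    (h : spectralRadius ℂ a < r) : ∀ᶠ n : ℕ in atTop, ‖a ^ n‖ ≤ (r : ℝ) ^ n := by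
  filter_upwards [(spectrum.pow_norm_pow_one_div_tendsto_nhds_spectralRadius a).eventually_lt_const h,
    eventually_ne_atTop 0] with n hn hn0
  have hroot : ‖a ^ n‖ ^ (1 / n : ℝ) < r := by
    rwa [ENNReal.ofReal_lt_iff_lt_toReal (by positivity) ENNReal.coe_ne_top] at hn
  calc ‖a ^ n‖ = (‖a ^ n‖ ^ (1 / n : ℝ)) ^ n := by
        rw [← Real.rpow_natCast, ← Real.rpow_mul (norm_nonneg _),
          one_div_mul_cancel (by exact_mod_cast hn0), Real.rpow_one]
    _ ≤ (r : ℝ) ^ n := pow_le_pow_left₀ (by positivity) hroot.le n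

theorem summable_norm_pow_of_spectralRadius_lt_one {a : A} (h : spectralRadius ℂ a < 1) :
    Summable fun n : ℕ => ‖a ^ n‖ := by
  obtain ⟨r, har, hr1⟩ := ENNReal.lt_iff_exists_nnreal_btwn.mp h
  refine .of_norm_bounded_eventually_nat
    (summable_geometric_of_lt_one r.2 (by exact_mod_cast hr1)) ?_
  filter_upwards [eventually_norm_pow_le_of_spectralRadius_lt har] with n hn
  rwa [norm_norm]

end NeumannSeries

namespace Matrix

section LinftyOpNorm

attribute [local instance] Matrix.linftyOpSeminormedAddCommGroup Matrix.linftyOpNormedRing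
  Matrix.linftyOpNormedAlgebra

theorem norm_apply_le_linfty_opNorm {m n α : Type*} [Fintype m] [Fintype n]
    [SeminormedAddCommGroup α] (B : Matrix m n α) (i : m) (j : n) : ‖B i j‖ ≤ ‖B‖ :=
  (PiLp.norm_apply_le (WithLp.toLp 1 (B i)) j).trans
    (norm_le_pi_norm (fun i => WithLp.toLp 1 (B i)) i)

theorem summable_norm_pow_apply_of_specRad_lt_one {N : ℕ} {M : Matrix (Fin N) (Fin N) ℝ}
    (h : specRad M < 1) (i k : Fin N) : Summable fun n : ℕ => ‖(M ^ n) i k‖ := by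
  refine .of_nonneg_of_le (fun _ => norm_nonneg _) (fun n => ?_)
    (summable_norm_pow_of_spectralRadius_lt_one h)
  have hmap : (M.map (algebraMap ℝ ℂ)) ^ n = (M ^ n).map (algebraMap ℝ ℂ) :=
    ((algebraMap ℝ ℂ).mapMatrix.map_pow M n).symm
  rw [hmap, ← Complex.norm_real]
  exact norm_apply_le_linfty_opNorm ((M ^ n).map (algebraMap ℝ ℂ)) i k

end LinftyOpNorm

section Neumann

variable {N : ℕ} {M : Matrix (Fin N) (Fin N) ℝ}

theorem summable_pow_of_specRad_lt_one (h : specRad M < 1) : Summable fun n : ℕ => M ^ n :=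
  Pi.summable.2 fun i => Pi.summable.2 fun k =>
    (summable_norm_pow_apply_of_specRad_lt_one h i k).of_norm

theorem inv_one_sub_eq_tsum_pow (h : specRad M < 1) : (1 - M)⁻¹ = ∑' n : ℕ, M ^ n :=
  inv_eq_right_inv (summable_pow_of_specRad_lt_one h).one_sub_mul_tsum_pow

theorem one_apply_le_inv_one_sub_apply (hM : ∀ i k, 0 ≤ M i k) (h : specRad M < 1)
    (i k : Fin N) : (1 : Matrix (Fin N) (Fin N) ℝ) i k ≤ (1 - M)⁻¹ i k := by
  rw [inv_one_sub_eq_tsum_pow h, ← pow_zero M]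
  exact le_hasSum (Pi.hasSum.1 (Pi.hasSum.1 (summable_pow_of_specRad_lt_one h).hasSum i) k) 0
    fun n _ => pow_apply_nonneg hM n i k

theorem inv_one_sub_apply_nonneg (hM : ∀ i k, 0 ≤ M i k) (h : specRad M < 1) (i k : Fin N) :
    0 ≤ (1 - M)⁻¹ i k := by
  refine le_trans ?_ (one_apply_le_inv_one_sub_apply hM h i k)
  rw [one_apply]
  split_ifs <;> norm_num

theorem inv_one_sub_apply_self_pos (hM : ∀ i k, 0 ≤ M i k) (h : specRad M < 1) (i : Fin N) :
    0 < (1 - M)⁻¹ i i :=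
  one_pos.trans_le (by simpa using one_apply_le_inv_one_sub_apply hM h i i)

end Neumann

variable {n : Type*} [Fintype n] {B : Matrix n n ℝ} {v w : n → ℝ}

theorem mulVec_le_mulVec_of_nonneg (hB : ∀ i j, 0 ≤ B i j) (hvw : v ≤ w) : B *ᵥ v ≤ B *ᵥ w :=
  fun i => dotProduct_le_dotProduct_of_nonneg_left hvw fun j => hB i j

theorem mulVec_apply_lt_mulVec_apply (hB : ∀ i j, 0 ≤ B i j) {i : n} (hii : 0 < B i i)
    (hvw : v ≤ w) (hi : v i < w i) : (B *ᵥ v) i < (B *ᵥ w) i :=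
  Finset.sum_lt_sum (fun j _ => mul_le_mul_of_nonneg_left (hvw j) (hB i j))
    ⟨i, Finset.mem_univ i, mul_lt_mul_of_pos_left hi hii⟩

end Matrix

/-- The accelerated mapping of a positive concave mapping is a standard interference
mapping: it is positive, scalable and monotone. -/
theorem accelerated_mapping_standard_interference {N : ℕ} (f : Fin N → (Fin N → ℝ) → ℝ)
    (hconc : ∀ i, ConcaveOn ℝ {x : Fin N → ℝ | 0 ≤ x} (f i))
    (husc : ∀ i, UpperSemicontinuousOn (f i) {x : Fin N → ℝ | 0 ≤ x})
    (hpos : ∀ i, ∀ x : Fin N → ℝ, 0 ≤ x → 0 < f i x)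
    (M : Matrix (Fin N) (Fin N) ℝ) (hM : IsLBM f M)
    (hrad : specRad M < 1)
    (TA : (Fin N → ℝ) → (Fin N → ℝ))
    (hTA : ∀ x : Fin N → ℝ, TA x = (1 - M)⁻¹ *ᵥ ((fun i => f i x) - M *ᵥ x)) :
    (∀ x : Fin N → ℝ, 0 ≤ x → ∀ i, 0 < TA x i) ∧
    (∀ x : Fin N → ℝ, 0 ≤ x → ∀ α : ℝ, 1 < α → ∀ i, TA (α • x) i < α * TA x i) ∧
    (∀ x y : Fin N → ℝ, 0 ≤ x → 0 ≤ y → x ≤ y → TA x ≤ TA y) := by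
  have hf0 : ∀ i, ∀ y : Fin N → ℝ, 0 ≤ y → 0 ≤ f i y := fun i y hy => (hpos i y hy).le
  have hB0 := inv_one_sub_apply_nonneg (hM.nonneg hf0) hrad
  have hBii := inv_one_sub_apply_self_pos (hM.nonneg hf0) hrad
  set F : (Fin N → ℝ) → Fin N → ℝ := fun x => (fun i => f i x) - M *ᵥ x
  have hFmono : ∀ x y : Fin N → ℝ, 0 ≤ x → x ≤ y → F x ≤ F y := fun _ _ hx hxy =>
    hM.sub_mulVec_le_sub_mulVec hconc husc hf0 hx hxy
  have hFpos : ∀ x : Fin N → ℝ, 0 ≤ x → ∀ i, 0 < F x i := fun x hx i =>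
    (show 0 < F 0 i by simpa [F] using hpos i 0 le_rfl).trans_le (hFmono 0 x le_rfl hx i)
  have hFscale : ∀ x : Fin N → ℝ, 0 ≤ x → ∀ α : ℝ, 1 < α → ∀ i, F (α • x) i < (α • F x) i :=
    fun _ hx _ hα => sub_mulVec_smul_lt M hconc (fun i => hpos i 0 le_rfl) hx hα
  refine ⟨fun x hx i => ?_, fun x hx α hα i => ?_, fun x y hx _ hxy => ?_⟩
  · have := mulVec_apply_lt_mulVec_apply (v := 0) hB0 (hBii i) (fun k => (hFpos x hx k).le)
      (hFpos x hx i)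
    rwa [mulVec_zero, Pi.zero_apply, ← hTA] at this
  · rw [hTA, hTA, ← smul_eq_mul, ← Pi.smul_apply, ← mulVec_smul]
    exact mulVec_apply_lt_mulVec_apply hB0 (hBii i) (fun k => (hFscale x hx α hα k).le)
      (hFscale x hx α hα i)
  · rw [hTA, hTA]
    exact mulVec_le_mulVec_of_nonneg hB0 (hFmono x y hx hxy)
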